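/- arXiv:1201.6089 — 3 statements merged into one kernel-verified Lean document; each statement's English description precedes it below -/
import Mathlib

section
/- Let (X_n) be a uniformly elliptic process in ℝ^2 with constants r, h and jumps bounded by K ≥ 1, with drift D_n = E[X_{n+1}-X_n | F_n], and let Y_n = X_n − Σ_{k<n} D_k be the associated martingale. Then Y is uniformly elliptic with constants r' = rh/(2√2) and h' = rh/(4K); that is, for every unit vector ℓ, P[(Y_{n+1}-Y_n)·ℓ > r' | F_n] > h' a.s. -/
open MeasureTheory RealInnerProductSpace

/-!
Fix `ℓ` and write `F = ⟪ℓ, X (n+1) - X n⟫` and `G = ⟪ℓ, D n⟫ = E[F | ℱ n]`, so that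
`⟪ℓ, Y (n+1) - Y n⟫ = F - G` has conditional mean zero and `|F - G| ≤ 2K`.
Where `G ≤ 0`, the event `F > r` forces `(F - G)⁺ ≥ r`; where `G ≥ 0`, the event `F < -r`
forces `(F - G)⁻ ≥ r`. Ellipticity in the directions `±ℓ` together with
`E[(F - G)⁺ | ℱ n] = E[(F - G)⁻ | ℱ n]` thus gives `E[(F - G)⁺ | ℱ n] > rh`.
Since `(F - G)⁺ ≤ c + 2K·1{F - G > c}` for `c ≥ 0`, we get
`P[F - G > c | ℱ n] > (rh - c)/(2K)`, which is at least `rh/(4K)` for `c = rh/(2√2) ≤ rh/2`.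
-/

section ConditionalBounds

variable {Ω : Type*} {m m0 : MeasurableSpace Ω} {μ : Measure Ω}

lemma condExp_posPart_eq_condExp_negPart {W : Ω → ℝ} (hW : Integrable W μ)
    (hW0 : μ[W|m] =ᵐ[μ] 0) :
    μ[fun ω => max (W ω) 0|m] =ᵐ[μ] μ[fun ω => max (-W ω) 0|m] := by
  have hsub : μ[(fun ω => max (W ω) 0) - (fun ω => max (-W ω) 0)|m] =ᵐ[μ]
      μ[fun ω => max (W ω) 0|m] - μ[fun ω => max (-W ω) 0|m] :=
    condExp_sub hW.pos_part hW.neg.pos_part m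
  have hW_eq : ((fun ω => max (W ω) 0) - fun ω => max (-W ω) 0) = W :=
    funext fun ω => max_zero_sub_max_neg_zero_eq_self (W ω)
  rw [hW_eq] at hsub
  filter_upwards [hsub, hW0] with ω h₁ h₂
  simp only [Pi.sub_apply, Pi.zero_apply] at h₁ h₂
  linarith

lemma mul_lt_condExp_posPart_sub_of_nonpos [IsFiniteMeasure μ] (hm : m ≤ m0) {F G : Ω → ℝ}
    (hF : Integrable F μ) (hG : StronglyMeasurable[m] G) (hG_int : Integrable G μ) {r h : ℝ}
    (hr : 0 < r) (hU : ∀ᵐ ω ∂μ, h < μ[{ω | r < F ω}.indicator (fun _ => (1 : ℝ))|m] ω) :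
    ∀ᵐ ω ∂μ, G ω ≤ 0 → r * h < μ[fun ω => max (F ω - G ω) 0|m] ω := by
  set I := {ω | r < F ω}.indicator (fun _ => (1 : ℝ))
  set S := {ω | G ω ≤ 0}
  have hS : MeasurableSet[m] S := measurableSet_le hG.measurable measurable_const
  have hI : Integrable I μ :=
    (integrable_const 1).indicator₀ (nullMeasurableSet_lt aemeasurable_const hF.aemeasurable)
  have hle : S.indicator (r • I) ≤ᵐ[μ] fun ω => max (F ω - G ω) 0 :=
    Filter.Eventually.of_forall fun ω => by
      simp only [S, I, Set.indicator_apply, Set.mem_ofPred_eq, Pi.smul_apply, smul_eq_mul]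
      split_ifs with hωS hωF <;> simp only [mul_one, mul_zero, le_max_iff]
      · left; linarith
      all_goals right; rfl
  have hmono := condExp_mono (m := m) ((hI.smul r).indicator (hm S hS))
    (hF.sub hG_int).pos_part hle
  filter_upwards [hU, hmono, condExp_indicator (hI.smul r) hS, condExp_smul (m := m) r I]
    with ω hω hle_ω hind hsmul hωS
  calc r * h < r * μ[I|m] ω := mul_lt_mul_of_pos_left hω hr
    _ = μ[S.indicator (r • I)|m] ω := by
      rw [hind, Set.indicator_of_mem (show ω ∈ S from hωS), hsmul, Pi.smul_apply, smul_eq_mul]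
    _ ≤ _ := hle_ω

lemma condExp_le_mul_condExp_indicator_add [IsFiniteMeasure μ] (hm : m ≤ m0)
    {ξ : Ω → ℝ} (hξ : Integrable ξ μ) {a c : ℝ} (hc : 0 ≤ c) (hξa : ∀ᵐ ω ∂μ, ξ ω ≤ a) :
    μ[ξ|m] ≤ᵐ[μ] fun ω => a * μ[{ω | c < ξ ω}.indicator (fun _ => (1 : ℝ))|m] ω + c := by
  set I := {ω | c < ξ ω}.indicator (fun _ => (1 : ℝ))
  have hI : Integrable I μ :=
    (integrable_const 1).indicator₀ (nullMeasurableSet_lt aemeasurable_const hξ.aemeasurable)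
  have hξI : ξ ≤ᵐ[μ] fun ω => a * I ω + c := by
    filter_upwards [hξa] with ω hω
    by_cases hcξ : c < ξ ω
    · simp [I, hcξ]; linarith
    · simp [I, hcξ]; linarith
  refine (condExp_mono hξ ((hI.const_mul a).add (integrable_const c)) hξI).trans
    (((a • ContinuousLinearMap.id ℝ ℝ).comp_condExp_add_const_comm hm hI c).symm.trans ?_).le
  simp

lemma mul_lt_condExp_posPart_sub [IsFiniteMeasure μ] (hm : m ≤ m0) {F G : Ω → ℝ}
    (hF : Integrable F μ) (hG : StronglyMeasurable[m] G) (hGF : G =ᵐ[μ] μ[F|m]) {r h : ℝ}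
    (hr : 0 < r) (hU : ∀ᵐ ω ∂μ, h < μ[{ω | r < F ω}.indicator (fun _ => (1 : ℝ))|m] ω)
    (hU_neg : ∀ᵐ ω ∂μ, h < μ[{ω | r < -F ω}.indicator (fun _ => (1 : ℝ))|m] ω) :
    ∀ᵐ ω ∂μ, r * h < μ[fun ω => max (F ω - G ω) 0|m] ω := by
  have hG_int : Integrable G μ := integrable_condExp.congr hGF.symm
  have hW0 : μ[F - G|m] =ᵐ[μ] 0 := by
    filter_upwards [condExp_sub hF hG_int m, hGF] with ω h₁ h₂
    rw [h₁, condExp_of_stronglyMeasurable hm hG hG_int, Pi.sub_apply, ← h₂, Pi.zero_apply,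
      sub_self]
  have hsymm := condExp_posPart_eq_condExp_negPart (hF.sub hG_int) hW0
  filter_upwards [hsymm, mul_lt_condExp_posPart_sub_of_nonpos hm hF hG hG_int hr hU,
    mul_lt_condExp_posPart_sub_of_nonpos hm hF.neg hG.neg hG_int.neg hr hU_neg]
    with ω hω hpos hneg
  rcases le_total (G ω) 0 with hG0 | hG0
  · exact hpos hG0
  · simp only [Pi.neg_apply, Pi.sub_apply, neg_sub_neg, neg_sub] at hω hneg ⊢
    exact (hneg (neg_nonpos.2 hG0)).trans_eq hω.symm

theorem div_lt_condExp_indicator_sub [IsFiniteMeasure μ] (hm : m ≤ m0) {F G : Ω → ℝ}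
    (hF : Integrable F μ) (hG : StronglyMeasurable[m] G) (hGF : G =ᵐ[μ] μ[F|m]) {K r h c : ℝ}
    (hK : 0 < K) (hr : 0 < r) (hc : 0 ≤ c) (hFK : ∀ᵐ ω ∂μ, |F ω| ≤ K)
    (hU : ∀ᵐ ω ∂μ, h < μ[{ω | r < F ω}.indicator (fun _ => (1 : ℝ))|m] ω)
    (hU_neg : ∀ᵐ ω ∂μ, h < μ[{ω | r < -F ω}.indicator (fun _ => (1 : ℝ))|m] ω) :
    ∀ᵐ ω ∂μ, (r * h - c) / (2 * K) <
      μ[{ω | c < F ω - G ω}.indicator (fun _ => (1 : ℝ))|m] ω := by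
  have hG_int : Integrable G μ := integrable_condExp.congr hGF.symm
  have hGK : ∀ᵐ ω ∂μ, |G ω| ≤ K := by
    filter_upwards [hGF, ae_bdd_abs_condExp_of_ae_bdd_abs (m := m) hFK] with ω h₁ h₂
    rwa [h₁]
  have hWK : ∀ᵐ ω ∂μ, max (F ω - G ω) 0 ≤ 2 * K := by
    filter_upwards [hFK, hGK] with ω h₁ h₂
    rw [max_le_iff]
    constructor <;> linarith [abs_le.1 h₁, abs_le.1 h₂]
  have hset : {ω | c < max (F ω - G ω) 0} = {ω | c < F ω - G ω} := by
    ext ω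
    simp [hc.not_gt]
  have hB := condExp_le_mul_condExp_indicator_add (ξ := fun ω => max (F ω - G ω) 0) hm
    (hF.sub hG_int).pos_part hc hWK
  rw [hset] at hB
  filter_upwards [mul_lt_condExp_posPart_sub hm hF hG hGF hr hU hU_neg, hB] with ω h₁ h₂
  rw [div_lt_iff₀ (by positivity)]
  linarith

end ConditionalBounds

theorem stmt_8_general {Ω : Type*} [MeasurableSpace Ω] (μ : Measure Ω) [IsProbabilityMeasure μ]
    (ℱ : Filtration ℕ (inferInstance : MeasurableSpace Ω))
    (X : ℕ → Ω → EuclideanSpace ℝ (Fin 2)) (K r h : ℝ)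
    (hK : 1 ≤ K) (hr : 0 < r) (hh : 0 < h)
    (hint : ∀ n, Integrable (X n) μ)
    (hjumps : ∀ n, ∀ᵐ ω ∂μ, ‖X (n + 1) ω - X n ω‖ ≤ K)
    (hUE : ∀ (n : ℕ) (ℓ : EuclideanSpace ℝ (Fin 2)), ‖ℓ‖ = 1 →
      ∀ᵐ ω ∂μ, h < (μ[Set.indicator {ω' | r < ⟪ℓ, X (n + 1) ω' - X n ω'⟫} (fun _ => (1 : ℝ)) | ℱ n]) ω)
    (D : ℕ → Ω → EuclideanSpace ℝ (Fin 2))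
    (hD : ∀ k, D k = μ[fun ω => X (k + 1) ω - X k ω | ℱ k])
    (Y : ℕ → Ω → EuclideanSpace ℝ (Fin 2))
    (hY : ∀ n ω, Y n ω = X n ω - ∑ k ∈ Finset.range n, D k ω) :
    ∀ (n : ℕ) (ℓ : EuclideanSpace ℝ (Fin 2)), ‖ℓ‖ = 1 →
      ∀ᵐ ω ∂μ, r * h / (4 * K) <
        (μ[Set.indicator {ω' | r * h / (2 * Real.sqrt 2) < ⟪ℓ, Y (n + 1) ω' - Y n ω'⟫}
          (fun _ => (1 : ℝ)) | ℱ n]) ω := by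
  intro n ℓ hℓ
  have hΔY : ∀ ω, ⟪ℓ, Y (n + 1) ω - Y n ω⟫ = ⟪ℓ, X (n + 1) ω - X n ω⟫ - ⟪ℓ, D n ω⟫ := by
    intro ω
    rw [hY, hY, Finset.sum_range_succ, ← inner_sub_right]
    congr 1
    abel
  have hG : StronglyMeasurable[ℱ n] fun ω => ⟪ℓ, D n ω⟫ :=
    stronglyMeasurable_const.inner (hD n ▸ stronglyMeasurable_condExp)
  have hGF : (fun ω => ⟪ℓ, D n ω⟫) =ᵐ[μ] μ[fun ω => ⟪ℓ, X (n + 1) ω - X n ω⟫|ℱ n] := by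
    rw [hD n]
    exact (innerSL ℝ ℓ).comp_condExp_comm ((hint (n + 1)).sub (hint n))
  have hFK : ∀ᵐ ω ∂μ, |⟪ℓ, X (n + 1) ω - X n ω⟫| ≤ K := by
    filter_upwards [hjumps n] with ω hω
    exact (abs_real_inner_le_norm _ _).trans (by rwa [hℓ, one_mul])
  have hU_neg := hUE n (-ℓ) (by rw [norm_neg, hℓ])
  simp only [inner_neg_left] at hU_neg
  have hc : 0 ≤ r * h / (2 * Real.sqrt 2) := by positivity
  have hconst : r * h / (4 * K) ≤ (r * h - r * h / (2 * Real.sqrt 2)) / (2 * K) := by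
    have hsqrt : r * h / (2 * Real.sqrt 2) ≤ r * h / 2 :=
      div_le_div_of_nonneg_left (by positivity) two_pos (by linarith [Real.one_lt_sqrt_two])
    calc r * h / (4 * K) = (r * h - r * h / 2) / (2 * K) := by field_simp; ring
      _ ≤ _ := by gcongr
  simp_rw [hΔY]
  filter_upwards [div_lt_condExp_indicator_sub (ℱ.le n)
    (((hint (n + 1)).sub (hint n)).const_inner ℓ) hG hGF (by linarith) hr hc hFK (hUE n ℓ hℓ)
    hU_neg] with ω hω
  exact hconst.trans_lt hω

/-- If `X` is uniformly elliptic in `ℝ²` with constants `r, h` and jumps bounded by `K ≥ 1`,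
then the associated martingale `Y_n = X_n − Σ_{k<n} D_k` is uniformly elliptic with constants
`r' = rh/(2√2)` and `h' = rh/(4K)`. -/
theorem stmt_8 {Ω : Type*} [MeasurableSpace Ω] (μ : Measure Ω) [IsProbabilityMeasure μ]
    (ℱ : Filtration ℕ (inferInstance : MeasurableSpace Ω))
    (X : ℕ → Ω → EuclideanSpace ℝ (Fin 2)) (K r h : ℝ)
    (hK : 1 ≤ K) (hr : 0 < r) (hr1 : r ≤ 1) (hh : 0 < h)
    (hadapted : Adapted ℱ X) (hint : ∀ n, Integrable (X n) μ)
    (hjumps : ∀ n, ∀ᵐ ω ∂μ, ‖X (n + 1) ω - X n ω‖ ≤ K)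
    (hUE : ∀ (n : ℕ) (ℓ : EuclideanSpace ℝ (Fin 2)), ‖ℓ‖ = 1 →
      ∀ᵐ ω ∂μ, h < (μ[Set.indicator {ω' | r < ⟪ℓ, X (n + 1) ω' - X n ω'⟫} (fun _ => (1 : ℝ)) | ℱ n]) ω)
    (D : ℕ → Ω → EuclideanSpace ℝ (Fin 2))
    (hD : ∀ k, D k = μ[fun ω => X (k + 1) ω - X k ω | ℱ k])
    (Y : ℕ → Ω → EuclideanSpace ℝ (Fin 2))
    (hY : ∀ n ω, Y n ω = X n ω - ∑ k ∈ Finset.range n, D k ω) :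
    ∀ (n : ℕ) (ℓ : EuclideanSpace ℝ (Fin 2)), ‖ℓ‖ = 1 →
      ∀ᵐ ω ∂μ, r * h / (4 * K) <
        (μ[Set.indicator {ω' | r * h / (2 * Real.sqrt 2) < ⟪ℓ, Y (n + 1) ω' - Y n ω'⟫}
          (fun _ => (1 : ℝ)) | ℱ n]) ω :=
  stmt_8_general μ ℱ X K r h hK hr hh hint hjumps hUE D hD Y hY
end

section
/- Let (ξ, η) be a pair of conditionally defined random variables such that ξ = (Y_{n+1}-Y_n)·D̃_n for a martingale Y with jumps bounded by 2K, where D̃_n is F_n-measurable of unit norm, and assume P[ξ ≤ −r | F_n] ≥ h. Then E[ξ^+ | F_n] = E[ξ^- | F_n] ≥ rh and consequently P[ξ ≥ rh/2 | F_n] ≥ rh/(4K). -/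
/-!
Pulling the `F_n`-measurable factor `D̃_n` out of the conditional expectation gives
`E[ξ | F_n] = ⟪D̃_n, E[Y_{n+1} - Y_n | F_n]⟫ = 0`, hence `E[ξ⁺ | F_n] = E[ξ⁻ | F_n]`.
Taking conditional expectations in `r · 1{ξ ≤ -r} ≤ ξ⁻` gives `E[ξ⁻ | F_n] ≥ rh`, and in
`ξ⁺ ≤ rh/2 + 2K · 1{ξ ≥ rh/2}` (valid because `ξ ≤ ‖Y_{n+1} - Y_n‖ ≤ 2K`) gives
`rh ≤ rh/2 + 2K · P[ξ ≥ rh/2 | F_n]`.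
-/

open MeasureTheory RealInnerProductSpace

namespace MeasureTheory.Martingale

variable {Ω E : Type*} [MeasurableSpace Ω] {μ : Measure Ω} {ℱ : Filtration ℕ ‹MeasurableSpace Ω›}
  [NormedAddCommGroup E] [InnerProductSpace ℝ E] [CompleteSpace E] {Y : ℕ → Ω → E}

lemma condExp_increment_eq_zero [SigmaFiniteFiltration μ ℱ]
    (hY : Martingale Y ℱ μ) (n : ℕ) :
    μ[Y (n + 1) - Y n | ℱ n] =ᵐ[μ] 0 := by
  filter_upwards [condExp_sub (m := ℱ n) (hY.integrable (n + 1)) (hY.integrable n),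
    hY.condExp_ae_eq n.le_succ, hY.condExp_ae_eq (le_refl n)] with ω h hsucc hself
  simp_all

lemma integrable_inner_increment (hY : Martingale Y ℱ μ) (n : ℕ) {D : Ω → E}
    (hD : StronglyMeasurable[ℱ n] D) {C : ℝ} (hDC : ∀ ω, ‖D ω‖ ≤ C) :
    Integrable (fun ω => ⟪D ω, Y (n + 1) ω - Y n ω⟫) μ := by
  have hΔ : Integrable (Y (n + 1) - Y n) μ := (hY.integrable (n + 1)).sub (hY.integrable n)
  refine (hΔ.norm.const_mul C).mono' ?_ (ae_of_all _ fun ω => ?_)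
  · exact (hD.mono (ℱ.le n)).aestronglyMeasurable.inner hΔ.aestronglyMeasurable
  · calc ‖⟪D ω, Y (n + 1) ω - Y n ω⟫‖ ≤ ‖D ω‖ * ‖Y (n + 1) ω - Y n ω‖ := norm_inner_le_norm _ _
      _ ≤ C * ‖(Y (n + 1) - Y n) ω‖ := mul_le_mul_of_nonneg_right (hDC ω) (norm_nonneg _)

lemma condExp_inner_increment_eq_zero [SigmaFiniteFiltration μ ℱ]
    (hY : Martingale Y ℱ μ) (n : ℕ) {D : Ω → E}
    (hD : StronglyMeasurable[ℱ n] D) {C : ℝ} (hDC : ∀ ω, ‖D ω‖ ≤ C) :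
    μ[fun ω => ⟪D ω, Y (n + 1) ω - Y n ω⟫ | ℱ n] =ᵐ[μ] 0 := by
  have hΔ : Integrable (Y (n + 1) - Y n) μ := (hY.integrable (n + 1)).sub (hY.integrable n)
  filter_upwards [condExp_bilin_of_stronglyMeasurable_left (innerSL ℝ) (g := Y (n + 1) - Y n) hD
    (hY.integrable_inner_increment n hD hDC) hΔ, hY.condExp_increment_eq_zero n] with ω h h0
  rw [h0] at h
  exact h.trans (inner_zero_right _)

end MeasureTheory.Martingale

section ConditionalBounds

variable {Ω : Type*} {m m₀ : MeasurableSpace Ω} {μ : Measure Ω} {f g ξ : Ω → ℝ}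

lemma condExp_max_zero_ae_eq_condExp_max_neg_zero (hξ : Integrable ξ μ)
    (h0 : μ[ξ | m] =ᵐ[μ] 0) :
    μ[fun ω => max (ξ ω) 0 | m] =ᵐ[μ] μ[fun ω => max (-ξ ω) 0 | m] := by
  have hsplit : (fun ω => max (ξ ω) 0) - (fun ω => max (-ξ ω) 0) = ξ :=
    funext fun ω => max_zero_sub_max_neg_zero_eq_self (ξ ω)
  have hsub := condExp_sub (m := m) hξ.pos_part hξ.neg_part
  rw [hsplit] at hsub
  filter_upwards [hsub, h0] with ω hsub h0
  rw [h0, Pi.sub_apply, Pi.zero_apply] at hsub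
  linarith

lemma ae_const_mul_condExp_le_condExp {b : ℝ} (hf : Integrable f μ) (hg : Integrable g μ)
    (hfg : (fun ω => b * f ω) ≤ᵐ[μ] g) :
    ∀ᵐ ω ∂μ, b * μ[f | m] ω ≤ μ[g | m] ω := by
  have hsmul : μ[fun ω => b * f ω | m] =ᵐ[μ] fun ω => b * μ[f | m] ω := condExp_smul b f m
  filter_upwards [condExp_mono (m := m) (hf.const_mul b) hg hfg, hsmul] with ω hmono hsmul
  rwa [← hsmul]

lemma ae_condExp_le_const_add_const_mul_condExp [IsFiniteMeasure μ] (hm : m ≤ m₀) {a b : ℝ}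
    (hf : Integrable f μ) (hg : Integrable g μ) (hgf : g ≤ᵐ[μ] fun ω => a + b * f ω) :
    ∀ᵐ ω ∂μ, μ[g | m] ω ≤ a + b * μ[f | m] ω := by
  have hsmul : μ[fun ω => b * f ω | m] =ᵐ[μ] fun ω => b * μ[f | m] ω := condExp_smul b f m
  filter_upwards [condExp_mono (m := m) hg ((integrable_const a).add (hf.const_mul b)) hgf,
    condExp_add (m := m) (integrable_const a) (hf.const_mul b), hsmul] with ω hmono hadd hsmul
  simp_all [condExp_const hm]

lemma mul_indicator_le_max_neg_zero (r : ℝ) (ω : Ω) :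
    r * {ω' | ξ ω' ≤ -r}.indicator (fun _ => (1 : ℝ)) ω ≤ max (-ξ ω) 0 := by
  by_cases hω : ξ ω ≤ -r
  · simpa [hω] using le_max_of_le_left (by linarith : r ≤ -ξ ω)
  · simp [hω]

lemma max_zero_le_add_mul_indicator {c M : ℝ} (hc : 0 ≤ c) {ω : Ω} (hM : ξ ω ≤ M) :
    max (ξ ω) 0 ≤ c + M * {ω' | c ≤ ξ ω'}.indicator (fun _ => (1 : ℝ)) ω := by
  by_cases hω : c ≤ ξ ω
  · simp only [Set.indicator_of_mem (show ω ∈ {ω' | c ≤ ξ ω'} from hω), mul_one]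
    exact max_le (by linarith) (by linarith)
  · simp only [Set.indicator_of_notMem (show ω ∉ {ω' | c ≤ ξ ω'} from hω), mul_zero, add_zero]
    exact max_le (le_of_not_ge hω) hc

lemma ae_mul_condExp_indicator_le_condExp_max_neg_zero [IsFiniteMeasure μ] (hξm : Measurable ξ)
    (hξ : Integrable ξ μ) (r : ℝ) :
    ∀ᵐ ω ∂μ, r * μ[{ω' | ξ ω' ≤ -r}.indicator (fun _ => (1 : ℝ)) | m] ω ≤
      μ[fun ω => max (-ξ ω) 0 | m] ω :=
  ae_const_mul_condExp_le_condExp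
    ((integrable_const 1).indicator (hξm measurableSet_Iic)) hξ.neg_part
    (ae_of_all _ (mul_indicator_le_max_neg_zero r))

lemma ae_div_le_condExp_indicator [IsFiniteMeasure μ] (hm : m ≤ m₀) (hξm : Measurable ξ)
    (hξ : Integrable ξ μ) {a M : ℝ} (ha : 0 ≤ a) (hM : 0 < M) (hξM : ∀ᵐ ω ∂μ, ξ ω ≤ M)
    (hpos : ∀ᵐ ω ∂μ, a ≤ μ[fun ω => max (ξ ω) 0 | m] ω) :
    ∀ᵐ ω ∂μ, a / (2 * M) ≤ μ[{ω' | a / 2 ≤ ξ ω'}.indicator (fun _ => (1 : ℝ)) | m] ω := by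
  have hbound : ∀ᵐ ω ∂μ, μ[fun ω => max (ξ ω) 0 | m] ω ≤
      a / 2 + M * μ[{ω' | a / 2 ≤ ξ ω'}.indicator (fun _ => (1 : ℝ)) | m] ω :=
    ae_condExp_le_const_add_const_mul_condExp hm
      ((integrable_const 1).indicator (hξm measurableSet_Ici)) hξ.pos_part
      (hξM.mono fun ω hω => max_zero_le_add_mul_indicator (by linarith) hω)
  filter_upwards [hpos, hbound] with ω hpos hbound
  rw [div_le_iff₀ (by positivity)]
  linarith

end ConditionalBounds

/-- Let `Y` be a martingale with jumps bounded by `2K` and `D̃` an `F_n`-measurable unit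
vector, and set `ξ = (Y_{n+1}-Y_n)·D̃_n`. If `P[ξ ≤ −r | F_n] ≥ h` a.s., then
`E[ξ⁺ | F_n] = E[ξ⁻ | F_n] ≥ rh` and `P[ξ ≥ rh/2 | F_n] ≥ rh/(4K)` a.s. -/
theorem stmt_9 {Ω : Type*} [MeasurableSpace Ω] (μ : Measure Ω) [IsProbabilityMeasure μ]
    (ℱ : Filtration ℕ (inferInstance : MeasurableSpace Ω))
    (Y : ℕ → Ω → EuclideanSpace ℝ (Fin 2)) (K r h : ℝ)
    (hK : 1 ≤ K) (hr : 0 < r) (hh : 0 < h)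
    (hmart : Martingale Y ℱ μ)
    (hjumps : ∀ m, ∀ᵐ ω ∂μ, ‖Y (m + 1) ω - Y m ω‖ ≤ 2 * K)
    (n : ℕ) (Dt : Ω → EuclideanSpace ℝ (Fin 2))
    (hDtmeas : StronglyMeasurable[ℱ n] Dt) (hDtnorm : ∀ ω, ‖Dt ω‖ = 1)
    (ξ : Ω → ℝ) (hξ : ∀ ω, ξ ω = ⟪Dt ω, Y (n + 1) ω - Y n ω⟫)
    (hneg : ∀ᵐ ω ∂μ, h ≤ (μ[Set.indicator {ω' | ξ ω' ≤ -r} (fun _ => (1 : ℝ)) | ℱ n]) ω) :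
    (∀ᵐ ω ∂μ, (μ[fun ω' => max (ξ ω') 0 | ℱ n]) ω = (μ[fun ω' => max (-ξ ω') 0 | ℱ n]) ω ∧
      r * h ≤ (μ[fun ω' => max (ξ ω') 0 | ℱ n]) ω) ∧
    (∀ᵐ ω ∂μ, r * h / (4 * K) ≤
      (μ[Set.indicator {ω' | r * h / 2 ≤ ξ ω'} (fun _ => (1 : ℝ)) | ℱ n]) ω) := by
  obtain rfl : ξ = fun ω => ⟪Dt ω, Y (n + 1) ω - Y n ω⟫ := funext hξ
  have hDt : ∀ ω, ‖Dt ω‖ ≤ 1 := fun ω => (hDtnorm ω).le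
  have hξm : Measurable fun ω => ⟪Dt ω, Y (n + 1) ω - Y n ω⟫ :=
    ((hDtmeas.mono (ℱ.le n)).inner (((hmart.stronglyAdapted (n + 1)).mono (ℱ.le _)).sub
      ((hmart.stronglyAdapted n).mono (ℱ.le n)))).measurable
  have hξi := hmart.integrable_inner_increment n hDtmeas hDt
  have hξ_le : ∀ᵐ ω ∂μ, ⟪Dt ω, Y (n + 1) ω - Y n ω⟫ ≤ 2 * K := by
    filter_upwards [hjumps n] with ω hω
    calc _ ≤ ‖Dt ω‖ * ‖Y (n + 1) ω - Y n ω‖ := real_inner_le_norm _ _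
      _ ≤ 2 * K := by rw [hDtnorm ω, one_mul]; exact hω
  have hsymm := condExp_max_zero_ae_eq_condExp_max_neg_zero hξi
    (hmart.condExp_inner_increment_eq_zero n hDtmeas hDt)
  have hpos : ∀ᵐ ω ∂μ, r * h ≤ μ[fun ω' => max ⟪Dt ω', Y (n + 1) ω' - Y n ω'⟫ 0 | ℱ n] ω := by
    filter_upwards [hsymm, ae_mul_condExp_indicator_le_condExp_max_neg_zero hξm hξi r, hneg]
      with ω hsymm hmarkov hneg
    rw [hsymm]
    exact (mul_le_mul_of_nonneg_left hneg hr.le).trans hmarkov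
  refine ⟨by filter_upwards [hsymm, hpos] with ω h₁ h₂ using ⟨h₁, h₂⟩, ?_⟩
  filter_upwards [ae_div_le_condExp_indicator (ℱ.le n) hξm hξi (by positivity) (by linarith)
    hξ_le hpos] with ω hω
  rwa [show 4 * K = 2 * (2 * K) by ring]
end

section
/- Let (X_n) be a uniformly elliptic martingale in ℝ^d (d ≥ 2) with jumps bounded by K. Then there exists ε' > 0 (depending only on d, K, r, h) such that, writing Δ_n = X_{n+1} − X_n and φ_n the angle between X_n and Δ_n, one has E[‖Δ_n‖² cos² φ_n | F_n] < (1 − ε') E[‖Δ_n‖² | F_n] almost surely on {X_n ≠ 0}. -/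
/-!
Write `u = X_n / ‖X_n‖`. The quantity `‖Δ_n‖² - ‖Δ_n‖² cos² φ_n` is the squared length of the
part of `Δ_n` orthogonal to `u`, so it suffices to bound its conditional expectation below by a
constant `c`: since `E[‖Δ_n‖² | F_n] ≤ K²`, the claim then holds with `ε' = c / K²`.

As `d ≥ 2`, every point `p` of a dense sequence has a unit vector `ℓ` orthogonal to it, which
gives countably many unit vectors `ℓ_k` such that every direction `u` is almost orthogonal to
some `ℓ_k`: `|⟪ℓ_k, u⟫| < δ := r / (2K)`. On this `F_n`-measurable event, a jump with
`⟪ℓ_k, Δ_n⟫ > r` has orthogonal part of length at least `r - δK = r / 2`, so ellipticity in the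
direction `ℓ_k` bounds the conditional expectation below by `(r / 2)² h`.
-/

open MeasureTheory RealInnerProductSpace

section Geometry

variable {E : Type*} [NormedAddCommGroup E] [InnerProductSpace ℝ E]

/-- `‖y‖² cos² φ` for the angle `φ` between `x` and `y`; it is `0` when `x = 0`. -/
noncomputable def radialSq (x y : E) : ℝ := ⟪x, y⟫ ^ 2 / ‖x‖ ^ 2

theorem radialSq_eq_inner_sq (x y : E) : radialSq x y = ⟪‖x‖⁻¹ • x, y⟫ ^ 2 := by
  rw [radialSq, real_inner_smul_left, mul_pow, inv_pow, div_eq_inv_mul]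

theorem inner_sq_le_norm_sq {u : E} (hu : ‖u‖ ≤ 1) (y : E) : ⟪u, y⟫ ^ 2 ≤ ‖y‖ ^ 2 := by
  have := abs_real_inner_le_norm u y
  rw [← sq_abs]
  gcongr
  nlinarith [norm_nonneg y]

theorem norm_inv_norm_smul_le_one (x : E) : ‖‖x‖⁻¹ • x‖ ≤ 1 := by
  rcases eq_or_ne x 0 with rfl | hx
  · simp
  · exact (norm_smul_inv_norm hx).le

theorem radialSq_nonneg (x y : E) : 0 ≤ radialSq x y := by unfold radialSq; positivity

theorem radialSq_le_norm_sq (x y : E) : radialSq x y ≤ ‖y‖ ^ 2 :=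
  radialSq_eq_inner_sq x y ▸ inner_sq_le_norm_sq (norm_inv_norm_smul_le_one x) y

theorem sq_le_norm_sq_sub_inner_sq {u ℓ y : E} (hu : ‖u‖ ≤ 1) (hℓ : ‖ℓ‖ ≤ 1) {a : ℝ}
    (ha : 0 ≤ a) (h : a ≤ ⟪ℓ, y⟫ - |⟪ℓ, u⟫| * ‖y‖) : a ^ 2 ≤ ‖y‖ ^ 2 - ⟪u, y⟫ ^ 2 := by
  set t := ⟪u, y⟫
  -- `y - t • u` is at least as long as `a`, since its pairing with `ℓ` is.
  have ht : |t| ≤ ‖y‖ := (abs_real_inner_le_norm u y).trans (by nlinarith [norm_nonneg y])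
  have hP : ‖y - t • u‖ ^ 2 ≤ ‖y‖ ^ 2 - t ^ 2 := by
    rw [norm_sub_sq_real, real_inner_smul_right, real_inner_comm, norm_smul, mul_pow,
      Real.norm_eq_abs, sq_abs]
    change ‖y‖ ^ 2 - 2 * (t * t) + t ^ 2 * ‖u‖ ^ 2 ≤ _
    have : ‖u‖ ^ 2 ≤ 1 := pow_le_one₀ (norm_nonneg u) hu
    nlinarith [mul_le_mul_of_nonneg_left this (sq_nonneg t)]
  have hℓP : a ≤ ⟪ℓ, y - t • u⟫ := by
    rw [inner_sub_right, real_inner_smul_right]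
    nlinarith [abs_mul_abs_self t, abs_nonneg ⟪ℓ, u⟫, le_abs_self (t * ⟪ℓ, u⟫), abs_mul t ⟪ℓ, u⟫]
  have : a ≤ ‖y - t • u‖ :=
    hℓP.trans ((real_inner_le_norm _ _).trans (by nlinarith [norm_nonneg (y - t • u)]))
  nlinarith

theorem exists_norm_eq_one_inner_eq_zero [FiniteDimensional ℝ E] (hE : 2 ≤ Module.finrank ℝ E)
    (x : E) : ∃ ℓ : E, ‖ℓ‖ = 1 ∧ ⟪ℓ, x⟫ = 0 := by
  have hne : (ℝ ∙ x)ᗮ ≠ ⊥ := by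
    intro h
    have hsum := (ℝ ∙ x).finrank_add_finrank_orthogonal
    rw [h, finrank_bot] at hsum
    have : Module.finrank ℝ (ℝ ∙ x) ≤ 1 := by
      simpa only [Set.toFinset_singleton, Finset.card_singleton] using
        finrank_span_le_card (R := ℝ) ({x} : Set E)
    omega
  obtain ⟨v, hv, hv0⟩ := Submodule.exists_mem_ne_zero_of_ne_bot hne
  refine ⟨‖v‖⁻¹ • v, norm_smul_inv_norm hv0, ?_⟩
  rw [real_inner_smul_left, Submodule.mem_orthogonal_singleton_iff_inner_left.mp hv, mul_zero]

theorem exists_seq_norm_eq_one_abs_inner_lt [FiniteDimensional ℝ E]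
    (hE : 2 ≤ Module.finrank ℝ E) :
    ∃ ℓ : ℕ → E, (∀ k, ‖ℓ k‖ = 1) ∧ ∀ v : E, ∀ δ > 0, ∃ k, |⟪ℓ k, v⟫| < δ := by
  have : Nonempty E := ⟨0⟩
  choose ℓ hℓ hℓp using fun k =>
    exists_norm_eq_one_inner_eq_zero hE (TopologicalSpace.denseSeq E k)
  refine ⟨ℓ, hℓ, fun v δ hδ => ?_⟩
  obtain ⟨k, hk⟩ := (TopologicalSpace.denseRange_denseSeq E).exists_dist_lt v hδ
  refine ⟨k, ?_⟩
  calc |⟪ℓ k, v⟫| = |⟪ℓ k, v - TopologicalSpace.denseSeq E k⟫| := by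
        rw [inner_sub_right, hℓp, sub_zero]
    _ ≤ ‖ℓ k‖ * ‖v - TopologicalSpace.denseSeq E k‖ := abs_real_inner_le_norm _ _
    _ < δ := by rwa [hℓ, one_mul, ← dist_eq_norm]

theorem sq_half_le_norm_sq_sub_radialSq {ℓ x y : E} (hℓ : ‖ℓ‖ ≤ 1) {r K : ℝ} (hr : 0 ≤ r)
    (hyK : ‖y‖ ≤ K) (hℓx : |⟪ℓ, ‖x‖⁻¹ • x⟫| * K ≤ r / 2) (hℓy : r < ⟪ℓ, y⟫) :
    (r / 2) ^ 2 ≤ ‖y‖ ^ 2 - radialSq x y := by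
  rw [radialSq_eq_inner_sq]
  refine sq_le_norm_sq_sub_inner_sq (norm_inv_norm_smul_le_one x) hℓ (by positivity) ?_
  nlinarith [mul_le_mul_of_nonneg_left hyK (abs_nonneg ⟪ℓ, ‖x‖⁻¹ • x⟫)]

end Geometry

section Probability

variable {Ω : Type*} {m m₀ : MeasurableSpace Ω} {μ : Measure Ω}

theorem ae_condExp_le_condExp_of_ae_le_on {f g : Ω → ℝ} {s : Set Ω} (hm : m ≤ m₀)
    (hs : MeasurableSet[m] s) (hf : Integrable f μ) (hg : Integrable g μ)
    (hfg : ∀ᵐ ω ∂μ, ω ∈ s → f ω ≤ g ω) : ∀ᵐ ω ∂μ, ω ∈ s → μ[f|m] ω ≤ μ[g|m] ω := by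
  have hmono : μ[s.indicator f|m] ≤ᵐ[μ] μ[s.indicator g|m] := by
    refine condExp_mono (hf.indicator (hm s hs)) (hg.indicator (hm s hs)) ?_
    filter_upwards [hfg] with ω hω
    by_cases hωs : ω ∈ s <;> simp [hωs, hω]
  filter_upwards [hmono, condExp_indicator hf hs, condExp_indicator hg hs] with ω h hf' hg' hωs
  simpa [hf', hg', hωs] using h

variable {E : Type*} [NormedAddCommGroup E] [MeasurableSpace E] [BorelSpace E] {x y : Ω → E}
  {K : ℝ}

theorem integrable_norm_sq_of_ae_norm_le [IsFiniteMeasure μ] (hy : Measurable y)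
    (hyK : ∀ᵐ ω ∂μ, ‖y ω‖ ≤ K) : Integrable (fun ω => ‖y ω‖ ^ 2) μ := by
  refine .of_bound (hy.norm.pow_const 2).aestronglyMeasurable (K ^ 2) ?_
  filter_upwards [hyK] with ω hω
  rw [Real.norm_of_nonneg (by positivity)]
  exact pow_le_pow_left₀ (norm_nonneg _) hω 2

variable [InnerProductSpace ℝ E] [FiniteDimensional ℝ E]

theorem Measurable.radialSq (hx : Measurable x) (hy : Measurable y) :
    Measurable fun ω => radialSq (x ω) (y ω) :=
  ((hx.inner hy).pow_const 2).div (hx.norm.pow_const 2)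

variable [IsFiniteMeasure μ]

theorem integrable_radialSq_of_ae_norm_le (hx : Measurable x) (hy : Measurable y)
    (hyK : ∀ᵐ ω ∂μ, ‖y ω‖ ≤ K) : Integrable (fun ω => radialSq (x ω) (y ω)) μ := by
  refine .of_bound (hx.radialSq hy).aestronglyMeasurable (K ^ 2) ?_
  filter_upwards [hyK] with ω hω
  rw [Real.norm_of_nonneg (radialSq_nonneg _ _)]
  exact (radialSq_le_norm_sq _ _).trans (pow_le_pow_left₀ (norm_nonneg _) hω 2)

theorem ae_lt_condExp_norm_sq_sub_radialSq_of_abs_inner_lt (hm : m ≤ m₀)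
    (hx : Measurable[m] x) (hy : Measurable y) {ℓ : E} (hℓ : ‖ℓ‖ ≤ 1) {r h : ℝ} (hK : 0 < K)
    (hr : 0 < r) (hyK : ∀ᵐ ω ∂μ, ‖y ω‖ ≤ K)
    (hUE : ∀ᵐ ω ∂μ, h < μ[{ω | r < ⟪ℓ, y ω⟫}.indicator (fun _ => (1 : ℝ)) | m] ω) :
    ∀ᵐ ω ∂μ, |⟪ℓ, ‖x ω‖⁻¹ • x ω⟫| < r / (2 * K) →
      (r / 2) ^ 2 * h < μ[fun ω => ‖y ω‖ ^ 2 - radialSq (x ω) (y ω) | m] ω := by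
  set A := {ω | |⟪ℓ, ‖x ω‖⁻¹ • x ω⟫| < r / (2 * K)}
  set S := {ω | r < ⟪ℓ, y ω⟫}
  have hA : MeasurableSet[m] A :=
    hx (t := {v | |⟪ℓ, ‖v‖⁻¹ • v⟫| < r / (2 * K)}) <|
      measurableSet_lt (measurable_const.inner (measurable_norm.inv.smul measurable_id)).abs
        measurable_const
  have hS : MeasurableSet S := measurableSet_lt measurable_const (measurable_const.inner hy)
  have hG : Integrable (fun ω => ‖y ω‖ ^ 2 - radialSq (x ω) (y ω)) μ :=
    (integrable_norm_sq_of_ae_norm_le hy hyK).sub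
      (integrable_radialSq_of_ae_norm_le (hx.mono hm le_rfl) hy hyK)
  have hpt : ∀ᵐ ω ∂μ, ω ∈ A →
      ((r / 2) ^ 2 • S.indicator (fun _ => (1 : ℝ))) ω ≤ ‖y ω‖ ^ 2 - radialSq (x ω) (y ω) := by
    filter_upwards [hyK] with ω hyω hωA
    by_cases hωS : ω ∈ S
    · simp only [Pi.smul_apply, Set.indicator_of_mem hωS, smul_eq_mul, mul_one]
      refine sq_half_le_norm_sq_sub_radialSq hℓ hr.le hyω ?_ hωS
      calc |⟪ℓ, ‖x ω‖⁻¹ • x ω⟫| * K ≤ r / (2 * K) * K := by gcongr; exact hωA.le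
        _ = r / 2 := by field_simp
    · simp only [Pi.smul_apply, Set.indicator_of_notMem hωS, smul_zero, sub_nonneg]
      exact radialSq_le_norm_sq _ _
  filter_upwards [ae_condExp_le_condExp_of_ae_le_on hm hA
      (((integrable_const 1).indicator hS).smul _) hG hpt,
    condExp_smul ((r / 2) ^ 2) (S.indicator (fun _ => (1 : ℝ))) m, hUE] with ω hle hsmul hUEω hωA
  calc (r / 2) ^ 2 * h < (r / 2) ^ 2 * μ[S.indicator (fun _ => (1 : ℝ)) | m] ω := by gcongr
    _ ≤ _ := by simpa [hsmul] using hle hωA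

theorem ae_lt_condExp_norm_sq_sub_radialSq (hE : 2 ≤ Module.finrank ℝ E) (hm : m ≤ m₀)
    (hx : Measurable[m] x) (hy : Measurable y) {r h : ℝ} (hK : 0 < K) (hr : 0 < r)
    (hyK : ∀ᵐ ω ∂μ, ‖y ω‖ ≤ K)
    (hUE : ∀ ℓ : E, ‖ℓ‖ = 1 →
      ∀ᵐ ω ∂μ, h < μ[{ω | r < ⟪ℓ, y ω⟫}.indicator (fun _ => (1 : ℝ)) | m] ω) :
    ∀ᵐ ω ∂μ, (r / 2) ^ 2 * h < μ[fun ω => ‖y ω‖ ^ 2 - radialSq (x ω) (y ω) | m] ω := by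
  obtain ⟨ℓ, hℓ, hcover⟩ := exists_seq_norm_eq_one_abs_inner_lt hE
  have hk := fun k => ae_lt_condExp_norm_sq_sub_radialSq_of_abs_inner_lt hm hx hy (hℓ k).le hK hr
    hyK (hUE (ℓ k) (hℓ k))
  filter_upwards [ae_all_iff.2 hk] with ω hω
  obtain ⟨k, hk⟩ := hcover (‖x ω‖⁻¹ • x ω) (r / (2 * K)) (by positivity)
  exact hω k hk

theorem ae_condExp_radialSq_lt (hE : 2 ≤ Module.finrank ℝ E) (hm : m ≤ m₀)
    (hx : Measurable[m] x) (hy : Measurable y) {r h : ℝ} (hK : 0 < K) (hr : 0 < r) (hh : 0 ≤ h)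
    (hyK : ∀ᵐ ω ∂μ, ‖y ω‖ ≤ K)
    (hUE : ∀ ℓ : E, ‖ℓ‖ = 1 →
      ∀ᵐ ω ∂μ, h < μ[{ω | r < ⟪ℓ, y ω⟫}.indicator (fun _ => (1 : ℝ)) | m] ω) :
    ∀ᵐ ω ∂μ, μ[fun ω => radialSq (x ω) (y ω) | m] ω <
      (1 - r ^ 2 * h / (4 * K ^ 2)) * μ[fun ω => ‖y ω‖ ^ 2 | m] ω := by
  have hg := integrable_norm_sq_of_ae_norm_le hy hyK
  have hf := integrable_radialSq_of_ae_norm_le (hx.mono hm le_rfl) hy hyK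
  have hgK : ∀ᵐ ω ∂μ, μ[fun ω => ‖y ω‖ ^ 2 | m] ω ≤ K ^ 2 := by
    refine condExp_le_nonneg_const (sq_nonneg K) ?_
    filter_upwards [hyK] with ω hω
    exact pow_le_pow_left₀ (norm_nonneg _) hω 2
  filter_upwards [ae_lt_condExp_norm_sq_sub_radialSq hE hm hx hy hK hr hyK hUE,
    condExp_sub hg hf m, hgK] with ω hlow hsub hgKω
  have hlow' : (r / 2) ^ 2 * h <
      μ[fun ω => ‖y ω‖ ^ 2 | m] ω - μ[fun ω => radialSq (x ω) (y ω) | m] ω :=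
    hlow.trans_eq hsub
  have : r ^ 2 * h / (4 * K ^ 2) * μ[fun ω => ‖y ω‖ ^ 2 | m] ω ≤ (r / 2) ^ 2 * h :=
    calc _ ≤ r ^ 2 * h / (4 * K ^ 2) * K ^ 2 := by gcongr
      _ = (r / 2) ^ 2 * h := by field_simp; norm_num
  linarith

end Probability

/-- For a uniformly elliptic martingale in `ℝ^d` with jumps bounded by `K`, there is
`ε' > 0` (depending only on `d, K, r, h`) such that, with `Δ_n = X_{n+1} − X_n` and `φ_n` the
angle between `X_n` and `Δ_n`, one has
`E[‖Δ_n‖² cos² φ_n | F_n] < (1 − ε') E[‖Δ_n‖² | F_n]` a.s. on `{X_n ≠ 0}`. -/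
theorem stmt_13 {Ω : Type*} [MeasurableSpace Ω] (μ : Measure Ω) [IsProbabilityMeasure μ]
    (d : ℕ) (hd : 2 ≤ d) (ℱ : Filtration ℕ (inferInstance : MeasurableSpace Ω))
    (X : ℕ → Ω → EuclideanSpace ℝ (Fin d)) (K r h : ℝ)
    (hK : 1 ≤ K) (hr : 0 < r) (hh : 0 < h)
    (hmart : Martingale X ℱ μ)
    (hjumps : ∀ n, ∀ᵐ ω ∂μ, ‖X (n + 1) ω - X n ω‖ ≤ K)
    (hUE : ∀ (n : ℕ) (ℓ : EuclideanSpace ℝ (Fin d)), ‖ℓ‖ = 1 →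
      ∀ᵐ ω ∂μ, h < (μ[Set.indicator {ω' | r < ⟪ℓ, X (n + 1) ω' - X n ω'⟫} (fun _ => (1 : ℝ)) | ℱ n]) ω) :
    ∃ ε' > (0 : ℝ), ∀ n : ℕ, ∀ᵐ ω ∂μ, X n ω ≠ 0 →
      (μ[fun ω' => ⟪X n ω', X (n + 1) ω' - X n ω'⟫ ^ 2 / ‖X n ω'‖ ^ 2 | ℱ n]) ω <
        (1 - ε') * (μ[fun ω' => ‖X (n + 1) ω' - X n ω'‖ ^ 2 | ℱ n]) ω := by
  have hE : 2 ≤ Module.finrank ℝ (EuclideanSpace ℝ (Fin d)) := by rwa [finrank_euclideanSpace_fin]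
  have hX : ∀ k, Measurable[ℱ k] (X k) := fun k => (hmart.stronglyAdapted k).measurable
  have hX₀ : ∀ k, Measurable (X k) := fun k => (hX k).mono (ℱ.le k) le_rfl
  refine ⟨r ^ 2 * h / (4 * K ^ 2), by positivity, fun n => ?_⟩
  exact (ae_condExp_radialSq_lt hE (ℱ.le n) (hX n) ((hX₀ (n + 1)).sub (hX₀ n)) (by linarith) hr
    hh.le (hjumps n) (hUE n)).mono fun ω hω _ => hω
end
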